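/- arXiv:2210.11992 — 8 statements merged into one kernel-verified Lean document; each statement's English description precedes it below -/
import Mathlib

section
/- If f : 2^N → ℝ≥0 is monotone and submodular and H ⊆ N, then for every S ⊆ N \ H, the surrogate h_H(S) = 2^{−|H|} · Σ_{H_j ⊆ H} f(S ∪ H_j) satisfies h_H(S) ≥ (1/2)·f(S ∪ H) + (1/2)·f(S). -/
/-- For monotone submodular `f` and `H ⊆ N`, every `S ⊆ N \ H` satisfies
`h_H(S) = 2^{-|H|} ∑_{H_j ⊆ H} f(S ∪ H_j) ≥ (1/2) f(S ∪ H) + (1/2) f(S)`. -/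
theorem stmt_2 {α : Type*} [DecidableEq α] (N H : Finset α) (hH : H ⊆ N)
    (f : Finset α → ℝ) (hf0 : ∀ S, 0 ≤ f S)
    (hmono : ∀ A B : Finset α, A ⊆ B → f A ≤ f B)
    (hsub : ∀ A B : Finset α, A ⊆ B → ∀ x,
      f (insert x B) - f B ≤ f (insert x A) - f A)
    (S : Finset α) (hS : S ⊆ N \ H) :
    (1 / (2 : ℝ) ^ H.card) * ∑ Hj ∈ H.powerset, f (S ∪ Hj) ≥
      (1 / 2) * f (S ∪ H) + (1 / 2) * f S := by
  -- marginal-value form of submodularity for sets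
  have marg : ∀ C D : Finset α, C ⊆ D → ∀ T : Finset α,
      f (D ∪ T) - f D ≤ f (C ∪ T) - f C := by
    intro C D hCD T
    induction T using Finset.induction_on with
    | empty => simp
    | @insert x T hx ih =>
      have h1 : f (insert x (D ∪ T)) - f (D ∪ T) ≤ f (insert x (C ∪ T)) - f (C ∪ T) :=
        hsub (C ∪ T) (D ∪ T) (Finset.union_subset_union hCD (le_refl T)) x
      have e1 : D ∪ insert x T = insert x (D ∪ T) := by
        simp [Finset.union_insert]
      have e2 : C ∪ insert x T = insert x (C ∪ T) := by
        simp [Finset.union_insert]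
      rw [e1, e2]
      linarith
  -- general submodular inequality
  have submod : ∀ A B : Finset α, f (A ∪ B) + f (A ∩ B) ≤ f A + f B := by
    intro A B
    have := marg (A ∩ B) B Finset.inter_subset_right A
    have e1 : B ∪ A = A ∪ B := Finset.union_comm B A
    have e2 : A ∩ B ∪ A = A := by
      rw [Finset.union_comm]; exact Finset.union_eq_left.mpr Finset.inter_subset_left
    rw [e1, e2] at this
    linarith
  -- pairing inequality
  have key : ∀ Hj ∈ H.powerset, f (S ∪ H) + f S ≤ f (S ∪ Hj) + f (S ∪ (H \ Hj)) := by
    intro Hj hHj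
    rw [Finset.mem_powerset] at hHj
    have h1 : (S ∪ Hj) ∪ (S ∪ (H \ Hj)) = S ∪ H := by
      rw [← Finset.union_union_distrib_left, Finset.union_sdiff_of_subset hHj]
    have h2 : (S ∪ Hj) ∩ (S ∪ (H \ Hj)) = S := by
      rw [← Finset.union_inter_distrib_left]
      simp
    have := submod (S ∪ Hj) (S ∪ (H \ Hj))
    rw [h1, h2] at this
    exact this
  -- reindexing the sum by complementation
  have reindex : ∑ Hj ∈ H.powerset, f (S ∪ (H \ Hj)) = ∑ Hj ∈ H.powerset, f (S ∪ Hj) := by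
    apply Finset.sum_nbij' (fun Hj => H \ Hj) (fun Hj => H \ Hj)
    · intro a ha; simp
    · intro a ha; simp
    · intro a ha
      rw [Finset.mem_powerset] at ha
      exact Finset.sdiff_sdiff_eq_self ha
    · intro a ha
      rw [Finset.mem_powerset] at ha
      exact Finset.sdiff_sdiff_eq_self ha
    · intro a ha; rfl
  -- sum the pairing inequality
  have hsum : (2 : ℝ) ^ H.card * (f (S ∪ H) + f S) ≤
      2 * ∑ Hj ∈ H.powerset, f (S ∪ Hj) := by
    have := Finset.sum_le_sum key
    rw [Finset.sum_const, Finset.card_powerset, Finset.sum_add_distrib, reindex] at this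
    rw [nsmul_eq_mul] at this
    push_cast at this
    linarith
  have h2 : (0 : ℝ) < 2 ^ H.card := by positivity
  have e : (1 / (2 : ℝ) ^ H.card) * ∑ Hj ∈ H.powerset, f (S ∪ Hj)
      = (∑ Hj ∈ H.powerset, f (S ∪ Hj)) / 2 ^ H.card := one_div_mul_eq_div _ _
  rw [ge_iff_le, e, le_div_iff₀ h2]
  nlinarith [hsum]
end

section
/- For any monotone submodular f : 2^N → ℝ≥0 with f(∅) = 0 and any nonempty set S ⊆ N, the comparison function f_0(S) = (1/|S|) · Σ_{e ∈ S} f(S \ {e}) satisfies (1 − 1/|S|)·f(S) ≤ f_0(S) ≤ f(S). -/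
/-!
By submodularity the loss `f S - f (S \ {e})` of removing `e` only shrinks when elements are
added to `S`, so inserting the elements of `S` one at a time shows that the losses sum to at most
`f S - f ∅ = f S`; this is the lower bound. The upper bound is monotonicity, term by term.
-/

section Submodular

variable {α : Type*} [DecidableEq α] (f : Finset α → ℝ)
  (hsub : ∀ A B : Finset α, A ⊆ B → ∀ x, f (insert x B) - f B ≤ f (insert x A) - f A)
include hsub

theorem sub_erase_insert_le_sub_erase {s : Finset α} {e : α} (he : e ∈ s) (a : α) :
    f (insert a s) - f ((insert a s).erase e) ≤ f s - f (s.erase e) := by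
  obtain rfl | hea := eq_or_ne e a
  · rw [Finset.insert_eq_of_mem he]
  · have hB : (insert a s).erase e = insert a (s.erase e) := Finset.erase_insert_of_ne hea.symm
    have hsB : insert e (insert a (s.erase e)) = insert a s := by
      rw [Finset.insert_comm, Finset.insert_erase he]
    simpa only [hB, hsB, Finset.insert_erase he] using
      hsub (s.erase e) (insert a (s.erase e)) (Finset.subset_insert _ _) e

theorem sum_sub_erase_le_sub_empty (S : Finset α) :
    ∑ e ∈ S, (f S - f (S.erase e)) ≤ f S - f ∅ := by
  induction S using Finset.induction_on with
  | empty => simp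
  | @insert a s ha ih =>
    calc ∑ e ∈ insert a s, (f (insert a s) - f ((insert a s).erase e))
        = f (insert a s) - f s + ∑ e ∈ s, (f (insert a s) - f ((insert a s).erase e)) := by
          rw [Finset.sum_insert ha, Finset.erase_insert ha]
      _ ≤ f (insert a s) - f s + ∑ e ∈ s, (f s - f (s.erase e)) :=
          add_le_add_right
            (Finset.sum_le_sum fun e he => sub_erase_insert_le_sub_erase f hsub he a) _
      _ ≤ f (insert a s) - f ∅ := by linarith

end Submodular

theorem stmt_3_general {α : Type*} [DecidableEq α]
    (f : Finset α → ℝ) (hempty : f ∅ = 0)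
    (hmono : ∀ A B : Finset α, A ⊆ B → f A ≤ f B)
    (hsub : ∀ A B : Finset α, A ⊆ B → ∀ x,
      f (insert x B) - f B ≤ f (insert x A) - f A)
    (S : Finset α) (hne : S.Nonempty) :
    (1 - 1 / (S.card : ℝ)) * f S ≤ (1 / (S.card : ℝ)) * ∑ e ∈ S, f (S.erase e) ∧
      (1 / (S.card : ℝ)) * ∑ e ∈ S, f (S.erase e) ≤ f S := by
  have hcard : (0 : ℝ) < S.card := by exact_mod_cast hne.card_pos
  have hlower : S.card * f S - f S ≤ ∑ e ∈ S, f (S.erase e) := by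
    have hloss := sum_sub_erase_le_sub_empty f hsub S
    rw [Finset.sum_sub_distrib, Finset.sum_const, nsmul_eq_mul, hempty] at hloss
    linarith
  have hupper : ∑ e ∈ S, f (S.erase e) ≤ S.card * f S := by
    simpa using Finset.sum_le_card_nsmul S _ (f S) fun e _ => hmono _ _ (S.erase_subset e)
  constructor
  · field_simp
    linarith
  · field_simp
    linarith

/-- For monotone submodular `f` with `f ∅ = 0` and nonempty `S ⊆ N`,
the comparison function `f₀(S) = (1/|S|) ∑_{e ∈ S} f (S \ {e})` satisfies
`(1 - 1/|S|) f(S) ≤ f₀(S) ≤ f(S)`. -/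
theorem stmt_3 {α : Type*} [DecidableEq α] (N : Finset α)
    (f : Finset α → ℝ) (hf0 : ∀ S, 0 ≤ f S) (hempty : f ∅ = 0)
    (hmono : ∀ A B : Finset α, A ⊆ B → f A ≤ f B)
    (hsub : ∀ A B : Finset α, A ⊆ B → ∀ x,
      f (insert x B) - f B ≤ f (insert x A) - f A)
    (S : Finset α) (hS : S ⊆ N) (hne : S.Nonempty) :
    (1 - 1 / (S.card : ℝ)) * f S ≤ (1 / (S.card : ℝ)) * ∑ e ∈ S, f (S.erase e) ∧
      (1 / (S.card : ℝ)) * ∑ e ∈ S, f (S.erase e) ≤ f S :=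
  stmt_3_general f hempty hmono hsub S hne
end

section
/- Let f be monotone submodular with f(∅) = 0, and let O* ⊆ N with |O*| = r ≥ 1. If A ⊆ N is a uniformly random subset of N of size k ≤ r, then E[f(O* \ A)] ≥ (1 − k/r)·f(O*). -/
/-!
Write `n = |N|` and `S_m = ∑_{|A| = m} f (O* \ A)`. By diminishing returns, the losses
`f S - f (S - x)` of the single elements `x` of `S = O* \ A` add up to at most `f S`. Summing this
over all `m`-sets `A` and counting each `(m + 1)`-set `A ∪ {x}` once for each of its elements gives
`(n - m - 1) S_m ≤ (m + 1) S_{m+1}`, hence by induction `S_k ≥ C(n - 1, k) f O*`. Dividing by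
`C(n, k)`, the average is at least `(1 - k / n) f O* ≥ (1 - k / r) f O*`.
-/

open Finset

theorem Nat.cast_sub_one_choose {n k : ℕ} (hn : 0 < n) (hk : k ≤ n) :
    ((n - 1).choose k : ℝ) = n.choose k * (1 - k / n) := by
  have h : ((n - 1).choose k : ℝ) * n = n.choose k * (n - k) := by
    rw [← Nat.cast_sub hk]
    exact_mod_cast Nat.sub_add_cancel hn ▸ Nat.choose_mul_succ_eq (n - 1) k
  field_simp
  linarith

section

variable {α : Type*} [DecidableEq α]

theorem sum_powersetCard_sum_sdiff_insert {M : Type*} [AddCommMonoid M] (N : Finset α) (m : ℕ)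
    (g : Finset α → M) :
    ∑ A ∈ N.powersetCard m, ∑ x ∈ N \ A, g (insert x A) =
      (m + 1) • ∑ B ∈ N.powersetCard (m + 1), g B := by
  have hcard : ∀ B ∈ N.powersetCard (m + 1), ∑ _x ∈ B, g B = (m + 1) • g B := fun B hB ↦ by
    rw [sum_const, (mem_powersetCard.mp hB).2]
  -- both sides sum over the pairs `(B, x)` of an `(m + 1)`-set `B` and an element `x ∈ B`
  rw [smul_sum, ← sum_congr rfl hcard, sum_sigma', sum_sigma']
  refine sum_nbij' (fun p ↦ ⟨insert p.2 p.1, p.2⟩) (fun p ↦ ⟨p.1.erase p.2, p.2⟩) ?_ ?_ ?_ ?_ ?_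
  · rintro ⟨A, x⟩ h
    simp only [mem_sigma, mem_powersetCard, mem_sdiff] at h ⊢
    obtain ⟨⟨hAN, hAm⟩, hxN, hxA⟩ := h
    exact ⟨⟨insert_subset hxN hAN, by rw [card_insert_of_notMem hxA, hAm]⟩, mem_insert_self x A⟩
  · rintro ⟨B, x⟩ h
    simp only [mem_sigma, mem_powersetCard, mem_sdiff] at h ⊢
    obtain ⟨⟨hBN, hBm⟩, hxB⟩ := h
    exact ⟨⟨(erase_subset x B).trans hBN, by rw [card_erase_of_mem hxB, hBm, Nat.add_sub_cancel]⟩,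
      hBN hxB, notMem_erase x B⟩
  · rintro ⟨A, x⟩ h
    simp only [mem_sigma, mem_sdiff] at h
    simp [erase_insert h.2.2]
  · rintro ⟨B, x⟩ h
    simp only [mem_sigma] at h
    simp [insert_erase h.2]
  · intro _ _
    rfl

def HasDiminishingReturns (f : Finset α → ℝ) : Prop :=
  ∀ A B : Finset α, A ⊆ B → ∀ x, f (insert x B) - f B ≤ f (insert x A) - f A

namespace HasDiminishingReturns

variable {f : Finset α → ℝ}

theorem sum_sub_erase_le_sub_sdiff (hf : HasDiminishingReturns f) {S T : Finset α}
    (hTS : T ⊆ S) : ∑ x ∈ T, (f S - f (S.erase x)) ≤ f S - f (S \ T) := by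
  induction T using Finset.induction_on with
  | empty => simp
  | @insert a T haT ih =>
    have haS : a ∈ S := hTS (mem_insert_self a T)
    have hmarg := hf ((S \ T).erase a) (S.erase a) (erase_subset_erase a sdiff_subset) a
    rw [insert_erase haS, insert_erase (mem_sdiff.mpr ⟨haS, haT⟩)] at hmarg
    rw [sum_insert haT, sdiff_insert]
    linarith [ih ((subset_insert a T).trans hTS)]

theorem sum_sub_erase_le_sub_empty (hf : HasDiminishingReturns f) {S U : Finset α}
    (hSU : S ⊆ U) : ∑ x ∈ U, (f S - f (S.erase x)) ≤ f S - f ∅ := by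
  rw [← sum_subset hSU fun x _ hxS ↦ by rw [erase_eq_of_notMem hxS, sub_self],
    ← Finset.sdiff_self S]
  exact hf.sum_sub_erase_le_sub_sdiff subset_rfl

theorem card_sub_sub_one_mul_sum_le (hf : HasDiminishingReturns f) (hf0 : 0 ≤ f ∅)
    {O N : Finset α} (hON : O ⊆ N) (m : ℕ) :
    ((#N : ℝ) - m - 1) * ∑ A ∈ N.powersetCard m, f (O \ A) ≤
      (m + 1) * ∑ B ∈ N.powersetCard (m + 1), f (O \ B) := by
  have hA : ∀ A ∈ N.powersetCard m,
      ((#N : ℝ) - m) * f (O \ A) - ∑ x ∈ N \ A, f (O \ insert x A) ≤ f (O \ A) := by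
    intro A hA
    obtain ⟨hAN, hAm⟩ := mem_powersetCard.mp hA
    have hloss := hf.sum_sub_erase_le_sub_empty (sdiff_subset_sdiff hON (subset_refl A))
    simp only [sum_sub_distrib, sum_const, card_sdiff_of_subset hAN, ← sdiff_insert,
      nsmul_eq_mul, hAm] at hloss
    rw [Nat.cast_sub (hAm ▸ card_le_card hAN)] at hloss
    linarith
  have hsum := sum_le_sum hA
  rw [sum_sub_distrib, ← mul_sum, sum_powersetCard_sum_sdiff_insert N m (fun B ↦ f (O \ B)),
    nsmul_eq_mul] at hsum
  push_cast at hsum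
  linarith

theorem choose_mul_le_sum_powersetCard (hf : HasDiminishingReturns f) (hf0 : 0 ≤ f ∅)
    {O N : Finset α} (hON : O ⊆ N) {m : ℕ} (hm : m ≤ #N) :
    ((#N - 1).choose m : ℝ) * f O ≤ ∑ A ∈ N.powersetCard m, f (O \ A) := by
  induction m with
  | zero => simp
  | succ m ih =>
    have hchoose : ((#N - 1).choose (m + 1) : ℝ) * (m + 1) =
        (#N - 1).choose m * ((#N : ℝ) - m - 1) := by
      have hcast : ((#N - 1 - m : ℕ) : ℝ) = #N - m - 1 := by
        rw [Nat.cast_sub (by omega), Nat.cast_sub (by omega)]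
        ring
      rw [← hcast]
      exact_mod_cast Nat.choose_succ_right_eq (#N - 1) m
    have hm' : (0 : ℝ) ≤ (#N : ℝ) - m - 1 := by
      rw [sub_sub, sub_nonneg]
      exact_mod_cast hm
    refine le_of_mul_le_mul_right ?_ (by positivity : (0 : ℝ) < m + 1)
    calc ((#N - 1).choose (m + 1) : ℝ) * f O * (m + 1)
        = ((#N : ℝ) - m - 1) * ((#N - 1).choose m * f O) := by
          rw [mul_right_comm, hchoose]; ring
      _ ≤ ((#N : ℝ) - m - 1) * ∑ A ∈ N.powersetCard m, f (O \ A) := by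
          gcongr; exact ih (by omega)
      _ ≤ (m + 1) * ∑ B ∈ N.powersetCard (m + 1), f (O \ B) :=
          hf.card_sub_sub_one_mul_sum_le hf0 hON m
      _ = _ := mul_comm _ _

end HasDiminishingReturns

end

theorem stmt_5_general {α : Type*} [DecidableEq α] (N : Finset α)
    (f : Finset α → ℝ) (hf0 : ∀ S, 0 ≤ f S)
    (hsub : ∀ A B : Finset α, A ⊆ B → ∀ x,
      f (insert x B) - f B ≤ f (insert x A) - f A)
    (Ostar : Finset α) (hO : Ostar ⊆ N) (r k : ℕ)
    (hr : Ostar.card = r) (hr1 : 1 ≤ r) (hk : k ≤ r) :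
    ((N.card.choose k : ℝ))⁻¹ * ∑ A ∈ N.powersetCard k, f (Ostar \ A) ≥
      (1 - (k : ℝ) / r) * f Ostar := by
  have hrN : r ≤ #N := hr ▸ card_le_card hO
  have hkN : k ≤ #N := hk.trans hrN
  calc (1 - (k : ℝ) / r) * f Ostar ≤ (1 - (k : ℝ) / #N) * f Ostar := by
        gcongr
        exact hf0 Ostar
    _ = ((#N).choose k : ℝ)⁻¹ * ((#N - 1).choose k * f Ostar) := by
        rw [Nat.cast_sub_one_choose (by omega) hkN, mul_assoc,
          inv_mul_cancel_left₀ (mod_cast (Nat.choose_pos hkN).ne')]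
    _ ≤ ((#N).choose k : ℝ)⁻¹ * ∑ A ∈ N.powersetCard k, f (Ostar \ A) := by
        gcongr
        exact HasDiminishingReturns.choose_mul_le_sum_powersetCard hsub (hf0 ∅) hO hkN

/-- For monotone submodular `f` with `f ∅ = 0`, `O* ⊆ N` with `|O*| = r ≥ 1`,
and `A` a uniformly random `k`-subset of `N` with `k ≤ r`, we have
`E[f(O* \ A)] ≥ (1 - k/r) · f(O*)`. -/
theorem stmt_5 {α : Type*} [DecidableEq α] (N : Finset α)
    (f : Finset α → ℝ) (hf0 : ∀ S, 0 ≤ f S) (hempty : f ∅ = 0)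
    (hmono : ∀ A B : Finset α, A ⊆ B → f A ≤ f B)
    (hsub : ∀ A B : Finset α, A ⊆ B → ∀ x,
      f (insert x B) - f B ≤ f (insert x A) - f A)
    (Ostar : Finset α) (hO : Ostar ⊆ N) (r k : ℕ)
    (hr : Ostar.card = r) (hr1 : 1 ≤ r) (hk : k ≤ r) :
    ((N.card.choose k : ℝ))⁻¹ * ∑ A ∈ N.powersetCard k, f (Ostar \ A) ≥
      (1 - (k : ℝ) / r) * f Ostar :=
  stmt_5_general N f hf0 hsub Ostar hO r k hr hr1 hk
end

section
/- Let f be a monotone submodular function with f(∅) = 0 and let O* ⊆ N with |O*| = r. For any partition of O* into m parts O_1, …, O_m each of size at most ℓ+1, the average over t of f(O* \ O_t) satisfies (1/m) · Σ_t f(O* \ O_t) ≥ (1 − (ℓ+1)/r) · f(O*). -/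
/-- Marginal-form submodularity extended to adding a whole set. -/
lemma sub_set {α : Type*} [DecidableEq α] (f : Finset α → ℝ)
    (hsub : ∀ A B : Finset α, A ⊆ B → ∀ x,
      f (insert x B) - f B ≤ f (insert x A) - f A) :
    ∀ (C A B : Finset α), A ⊆ B → f (B ∪ C) - f B ≤ f (A ∪ C) - f A := by
  intro C
  induction C using Finset.induction_on with
  | empty => intro A B _; simp
  | @insert x C hx ih =>
      intro A B hAB
      have h1 := ih A B hAB
      have h2 := hsub (A ∪ C) (B ∪ C) (Finset.union_subset_union hAB le_rfl) x
      have e1 : B ∪ insert x C = insert x (B ∪ C) := by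
        ext y; simp only [Finset.mem_insert, Finset.mem_union]; tauto
      have e2 : A ∪ insert x C = insert x (A ∪ C) := by
        ext y; simp only [Finset.mem_insert, Finset.mem_union]; tauto
      rw [e1, e2]
      linarith

/-- Lattice submodularity. -/
lemma sub_lattice {α : Type*} [DecidableEq α] (f : Finset α → ℝ)
    (hsub : ∀ A B : Finset α, A ⊆ B → ∀ x,
      f (insert x B) - f B ≤ f (insert x A) - f A) :
    ∀ A B : Finset α, f (A ∪ B) + f (A ∩ B) ≤ f A + f B := by
  intro A B
  have h := sub_set f hsub B (A ∩ B) A Finset.inter_subset_left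
  have e : A ∩ B ∪ B = B := by
    ext y; simp only [Finset.mem_union, Finset.mem_inter]; tauto
  rw [e] at h
  linarith

/-- For monotone submodular `f` with `f ∅ = 0`, `O* ⊆ N` with `|O*| = r`,
and a partition of `O*` into `m ≥ 1` parts `O_1, …, O_m` each of size at most `ℓ+1`,
the average of `f(O* \ O_t)` is at least `(1 - (ℓ+1)/r) · f(O*)`. -/
theorem stmt_6 {α : Type*} [DecidableEq α] (N : Finset α)
    (f : Finset α → ℝ) (hf0 : ∀ S, 0 ≤ f S) (hempty : f ∅ = 0)
    (hmono : ∀ A B : Finset α, A ⊆ B → f A ≤ f B)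
    (hsub : ∀ A B : Finset α, A ⊆ B → ∀ x,
      f (insert x B) - f B ≤ f (insert x A) - f A)
    (Ostar : Finset α) (hON : Ostar ⊆ N) (r m ℓ : ℕ) (hr : Ostar.card = r)
    (hr1 : 1 ≤ r) (hm : 1 ≤ m)
    (O : ℕ → Finset α)
    (hdisj : ∀ i < m, ∀ j < m, i ≠ j → Disjoint (O i) (O j))
    (hcover : (Finset.range m).biUnion O = Ostar)
    (hsize : ∀ t < m, (O t).card ≤ ℓ + 1) :
    (1 / (m : ℝ)) * ∑ t ∈ Finset.range m, f (Ostar \ O t) ≥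
      (1 - ((ℓ : ℝ) + 1) / r) * f Ostar := by
  have hlat := sub_lattice f hsub
  -- key claim
  have key : ∀ k ≤ m, (k : ℝ) * f Ostar + f (Ostar \ (Finset.range k).biUnion O)
      ≤ (∑ t ∈ Finset.range k, f (Ostar \ O t)) + f Ostar := by
    intro k
    induction k with
    | zero => simp
    | succ k ih =>
        intro hk1
        have hkm : k < m := hk1
        have ih' := ih (le_of_lt hkm)
        -- O k is disjoint from the union of previous parts
        have hdisjU : Disjoint ((Finset.range k).biUnion O) (O k) := by
          apply Finset.disjoint_biUnion_left _ _ _ |>.mpr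
          intro j hj
          exact hdisj j (lt_trans (Finset.mem_range.mp hj) hkm) k hkm
            (Nat.ne_of_lt (Finset.mem_range.mp hj))
        set U := (Finset.range k).biUnion O with hU
        have hunion : (Ostar \ U) ∪ (Ostar \ O k) = Ostar := by
          ext y
          simp only [Finset.mem_union, Finset.mem_sdiff]
          constructor
          · tauto
          · intro hy
            by_cases hyU : y ∈ U
            · refine Or.inr ⟨hy, ?_⟩
              exact fun hyk => (Finset.disjoint_left.mp hdisjU hyU) hyk
            · exact Or.inl ⟨hy, hyU⟩
        have hinter : (Ostar \ U) ∩ (Ostar \ O k) = Ostar \ ((Finset.range (k+1)).biUnion O) := by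
          ext y
          simp only [Finset.mem_inter, Finset.mem_sdiff, Finset.mem_biUnion,
            Finset.mem_range, hU]
          constructor
          · rintro ⟨⟨hy, h1⟩, ⟨_, h2⟩⟩
            refine ⟨hy, ?_⟩
            rintro ⟨j, hj, hyj⟩
            rcases Nat.lt_succ_iff_lt_or_eq.mp hj with h | h
            · exact h1 ⟨j, h, hyj⟩
            · exact h2 (h ▸ hyj)
          · rintro ⟨hy, h⟩
            constructor
            · exact ⟨hy, fun ⟨j, hj, hyj⟩ => h ⟨j, Nat.lt_succ_of_lt hj, hyj⟩⟩
            · exact ⟨hy, fun hyk => h ⟨k, Nat.lt_succ_self k, hyk⟩⟩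
        have hsubm := hlat (Ostar \ U) (Ostar \ O k)
        rw [hunion, hinter] at hsubm
        rw [Finset.sum_range_succ]
        push_cast
        linarith
  have hkeym := key m le_rfl
  rw [hcover] at hkeym
  simp only [Finset.sdiff_self, hempty] at hkeym
  -- card bound : r ≤ m * (ℓ + 1)
  have hcard : r ≤ m * (ℓ + 1) := by
    calc r = ((Finset.range m).biUnion O).card := by rw [hcover, hr]
    _ ≤ ∑ t ∈ Finset.range m, (O t).card := Finset.card_biUnion_le
    _ ≤ ∑ _t ∈ Finset.range m, (ℓ + 1) := by
        apply Finset.sum_le_sum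
        intro t ht
        exact hsize t (Finset.mem_range.mp ht)
    _ = m * (ℓ + 1) := by simp [Finset.sum_const, Finset.card_range, Nat.mul_comm]
  have hm0 : (0 : ℝ) < m := by exact_mod_cast hm
  have hr0 : (0 : ℝ) < r := by exact_mod_cast hr1
  have hF : 0 ≤ f Ostar := hf0 _
  have hdiv : 1 / (m : ℝ) ≤ ((ℓ : ℝ) + 1) / r := by
    rw [div_le_div_iff₀ hm0 hr0]
    have : (r : ℝ) ≤ (m : ℝ) * ((ℓ : ℝ) + 1) := by exact_mod_cast hcard
    linarith
  have hS : ((m : ℝ) - 1) * f Ostar ≤ ∑ t ∈ Finset.range m, f (Ostar \ O t) := by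
    linarith
  have h1 : (1 - ((ℓ : ℝ) + 1) / r) * f Ostar ≤ (1 - 1 / (m : ℝ)) * f Ostar := by
    apply mul_le_mul_of_nonneg_right _ hF
    linarith
  have h2 : (1 - 1 / (m : ℝ)) * f Ostar ≤ (1 / (m : ℝ)) * ∑ t ∈ Finset.range m, f (Ostar \ O t) := by
    have := mul_le_mul_of_nonneg_left hS (le_of_lt (one_div_pos.mpr hm0))
    have e : (1 / (m : ℝ)) * (((m : ℝ) - 1) * f Ostar) = (1 - 1 / (m : ℝ)) * f Ostar := by
      field_simp
    linarith [e ▸ this]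
  linarith
end

section
/- For any integer a ≥ 1, Σ_{t=0}^{a} C(a,t) · m_{a−1,t−1} ≤ H_a, where m_{s,t} = ∫_0^1 (e^p/(e−1)) p^t (1−p)^{s−t} dp (with the convention that terms with t = 0 use m_{a−1,−1} = 0 or are interpreted via the definition of the auxiliary function), and H_a = Σ_{i=1}^{a} 1/i is the a-th harmonic number. -/
/-!
Summing over `t` first, `∑_{t ≥ 1} C(a,t) p^(t-1) (1-p)^(a-t) = (1 - (1-p)^a) / p = ∑_{k<a} (1-p)^k`,
so the left-hand side equals `∑_{k<a} ∫₀¹ eᵖ/(e-1) (1-p)^k dp`. Bounding `eᵖ` on `[0,1]` by its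
chord `1 + (e-1)p` gives `∫₀¹ eᵖ (1-p)^k dp ≤ (e-1)/(k+1)` for `k ≥ 1` (this needs `e ≥ 5/2`); for
`k = 0` it is an equality. Summing over `k < a` gives `H_a`.
-/

open Finset intervalIntegral Real

theorem mul_sum_choose_succ_mul_pow {R : Type*} [CommRing R] (x y : R) (a : ℕ) :
    x * ∑ t ∈ range a, (a.choose (t + 1) : R) * x ^ t * y ^ (a - 1 - t) = (x + y) ^ a - y ^ a := by
  rw [add_pow, sum_range_succ', mul_sum]
  simp only [pow_zero, one_mul, Nat.sub_zero, Nat.choose_zero_right, Nat.cast_one, mul_one,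
    add_sub_cancel_right]
  refine sum_congr rfl fun t ht => ?_
  rw [show a - 1 - t = a - (t + 1) by omega]
  ring

theorem sum_choose_succ_mul_pow_mul_one_sub_pow (a : ℕ) (p : ℝ) :
    ∑ t ∈ range a, (a.choose (t + 1) : ℝ) * p ^ t * (1 - p) ^ (a - 1 - t) =
      ∑ k ∈ range a, (1 - p) ^ k := by
  rcases eq_or_ne p 0 with rfl | hp
  · rcases Nat.eq_zero_or_pos a with rfl | ha
    · simp
    · rw [sum_eq_single_of_mem 0 (mem_range.2 ha) fun t _ ht => by simp [ht]]
      simp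
  · apply mul_left_cancel₀ hp
    have := mul_neg_geom_sum (1 - p) a
    rw [sub_sub_cancel] at this
    rw [mul_sum_choose_succ_mul_pow, this, add_sub_cancel, one_pow]

theorem integral_one_sub_pow (k : ℕ) : ∫ p in (0 : ℝ)..1, (1 - p) ^ k = 1 / (k + 1) := by
  simp [integral_comp_sub_left fun p : ℝ => p ^ k]

theorem integral_mul_one_sub_pow (k : ℕ) :
    ∫ p in (0 : ℝ)..1, p * (1 - p) ^ k = 1 / (k + 1) - 1 / (k + 2) := by
  have hsplit : ∀ p : ℝ, p * (1 - p) ^ k = (1 - p) ^ k - (1 - p) ^ (k + 1) := fun p => by ring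
  simp_rw [hsplit]
  rw [integral_sub ((by fun_prop : Continuous _).intervalIntegrable _ _)
      ((by fun_prop : Continuous _).intervalIntegrable _ _), integral_one_sub_pow, integral_one_sub_pow]
  push_cast
  ring

theorem exp_le_one_add_mul {p : ℝ} (h0 : 0 ≤ p) (h1 : p ≤ 1) : exp p ≤ 1 + (exp 1 - 1) * p := by
  have := convexOn_exp.2 (Set.mem_univ 0) (Set.mem_univ 1) (sub_nonneg.2 h1) h0 (by ring)
  simp only [smul_eq_mul, mul_zero, mul_one, exp_zero, zero_add] at this
  linarith

theorem integral_exp_mul_one_sub_pow_le (k : ℕ) :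
    ∫ p in (0 : ℝ)..1, exp p * (1 - p) ^ k ≤ (exp 1 - 1) / (k + 1) := by
  rcases Nat.eq_zero_or_pos k with rfl | hk
  · simp [integral_exp]
  have hchord : ∫ p in (0 : ℝ)..1, exp p * (1 - p) ^ k ≤
      ∫ p in (0 : ℝ)..1, (1 - p) ^ k + (exp 1 - 1) * (p * (1 - p) ^ k) := by
    refine integral_mono_on zero_le_one ((by fun_prop : Continuous _).intervalIntegrable _ _)
      ((by fun_prop : Continuous _).intervalIntegrable _ _) fun p hp => ?_
    have := mul_le_mul_of_nonneg_right (exp_le_one_add_mul hp.1 hp.2)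
      (pow_nonneg (sub_nonneg.2 hp.2) k)
    linarith
  rw [integral_add ((by fun_prop : Continuous _).intervalIntegrable _ _)
      ((by fun_prop : Continuous _).intervalIntegrable _ _), integral_const_mul,
    integral_one_sub_pow, integral_mul_one_sub_pow] at hchord
  refine hchord.trans ?_
  have he : 5 / 2 < exp 1 := by linarith [exp_one_gt_d9]
  have hk : (1 : ℝ) ≤ k := by exact_mod_cast hk
  rw [← sub_nonneg]
  have : (exp 1 - 1) / (k + 1) - (1 / (k + 1) + (exp 1 - 1) * (1 / (k + 1) - 1 / (k + 2))) =
      ((exp 1 - 2) * (k + 1) - 1) / ((k + 1) * (k + 2)) := by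
    field_simp
    ring
  rw [this]
  apply div_nonneg _ (by positivity)
  nlinarith

theorem sum_choose_succ_mul_integral_eq (f : ℝ → ℝ) (hf : Continuous f) (a : ℕ) (b c : ℝ) :
    ∑ t ∈ range a, (a.choose (t + 1) : ℝ) * ∫ p in b..c, f p * p ^ t * (1 - p) ^ (a - 1 - t) =
      ∑ k ∈ range a, ∫ p in b..c, f p * (1 - p) ^ k := by
  simp_rw [← integral_const_mul]
  rw [← integral_finsetSum fun t _ => (by fun_prop : Continuous _).intervalIntegrable _ _,
    ← integral_finsetSum fun k _ => (by fun_prop : Continuous _).intervalIntegrable _ _]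
  congr 1
  ext p
  rw [← mul_sum, ← sum_choose_succ_mul_pow_mul_one_sub_pow, mul_sum]
  exact sum_congr rfl fun t _ => by ring

theorem stmt_9_general (a : ℕ) :
    (∑ t ∈ Finset.range (a + 1),
      (if t = 0 then (0 : ℝ) else (a.choose t : ℝ) *
        ∫ p in (0:ℝ)..1, Real.exp p / (Real.exp 1 - 1) * p ^ (t - 1) * (1 - p) ^ ((a - 1) - (t - 1))))
      ≤ ∑ i ∈ Finset.range a, (1 : ℝ) / (i + 1) := by
  rw [sum_range_succ']
  simp only [Nat.add_one_ne_zero, if_false, if_true, Nat.add_sub_cancel, add_zero]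
  rw [sum_choose_succ_mul_integral_eq _ (by fun_prop)]
  refine sum_le_sum fun k _ => ?_
  have he : 0 < exp 1 - 1 := by linarith [add_one_lt_exp one_ne_zero]
  simp_rw [div_mul_eq_mul_div]
  rw [intervalIntegral.integral_div, div_le_iff₀ he, one_div_mul_eq_div]
  exact integral_exp_mul_one_sub_pow_le k

/-- For any integer `a ≥ 1`,
`∑_{t=0}^{a} C(a,t) · m_{a-1,t-1} ≤ H_a`, where the `t = 0` term is `0` by convention
and `H_a = ∑_{i=1}^a 1/i`. -/
theorem stmt_9 (a : ℕ) (ha : 1 ≤ a) :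
    (∑ t ∈ Finset.range (a + 1),
      (if t = 0 then (0 : ℝ) else (a.choose t : ℝ) *
        ∫ p in (0:ℝ)..1, Real.exp p / (Real.exp 1 - 1) * p ^ (t - 1) * (1 - p) ^ ((a - 1) - (t - 1))))
      ≤ ∑ i ∈ Finset.range a, (1 : ℝ) / (i + 1) :=
  stmt_9_general a
end

section
/- For any integer a ≥ 2, Σ_{t=1}^{a} C(a,t) · (m_{a−1,t−1})^2 ≤ (e/(e−1))^2 · 2/a, where m_{s,t} = ∫_0^1 (e^p/(e−1)) p^t (1−p)^{s−t} dp. -/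
/-!
On `[0, 1]` the weight `exp p / (e - 1)` is at most `K = e / (e - 1)`, so `m_{n,k}` is at most `K`
times the Beta integral `B(k + 1, n - k + 1) = 1 / ((n + 1) C(n, k))`. With `a = n + 1`, `t = k + 1`
and `C(n + 1, k + 1) (k + 1) = (n + 1) C(n, k)`, the `t`-th term is then at most
`K² / ((n + 1) (k + 1) C(n, k))`. Finally `∑_{k ≤ n} 1 / ((k + 1) C(n, k)) ≤ 2`: the term `k = 0` is
`1`, and each of the other `n` terms is at most `1 / n` because `k C(n, k) = n C(n - 1, k - 1) ≥ n`.
-/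

open Real Finset Nat

theorem integral_pow_mul_one_sub_pow (m n : ℕ) :
    ∫ x in (0:ℝ)..1, x ^ m * (1 - x) ^ n = (m ! * n ! : ℝ) / (m + n + 1)! := by
  have h := Complex.betaIntegral_eq_Gamma_mul_div (m + 1) (n + 1) (by simp; positivity)
    (by simp; positivity)
  rw [show (m + 1 + (n + 1) : ℂ) = ((m + n + 1 : ℕ) : ℂ) + 1 by push_cast; ring,
    Complex.Gamma_nat_eq_factorial, Complex.Gamma_nat_eq_factorial,
    Complex.Gamma_nat_eq_factorial, Complex.betaIntegral] at h
  simp only [add_sub_cancel_right, Complex.cpow_natCast] at h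
  apply Complex.ofReal_injective
  rw [← intervalIntegral.integral_ofReal]
  push_cast
  exact h

theorem integral_pow_mul_one_sub_pow_sub {n k : ℕ} (hk : k ≤ n) :
    ∫ x in (0:ℝ)..1, x ^ k * (1 - x) ^ (n - k) = 1 / ((n + 1) * n.choose k) := by
  have hfact : (n.choose k * k ! * (n - k)! : ℝ) = n ! := by
    exact_mod_cast choose_mul_factorial_mul_factorial hk
  rw [integral_pow_mul_one_sub_pow, Nat.add_sub_cancel' hk, factorial_succ]
  push_cast
  rw [← hfact]
  have : (n.choose k : ℝ) ≠ 0 := by exact_mod_cast (choose_pos hk).ne'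
  field_simp

/-- The paper's `m_{s,t}`. -/
noncomputable def expMoment (s t : ℕ) : ℝ :=
  ∫ p in (0:ℝ)..1, exp p / (exp 1 - 1) * p ^ t * (1 - p) ^ (s - t)

lemma expMoment_nonneg (s t : ℕ) : 0 ≤ expMoment s t := by
  have : 1 < exp 1 := one_lt_exp_iff.mpr one_pos
  refine intervalIntegral.integral_nonneg zero_le_one fun p ⟨hp0, hp1⟩ => ?_
  have : 0 ≤ 1 - p := sub_nonneg.mpr hp1
  positivity

lemma expMoment_le (s t : ℕ) :
    expMoment s t ≤ exp 1 / (exp 1 - 1) * ∫ p in (0:ℝ)..1, p ^ t * (1 - p) ^ (s - t) := by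
  have : 1 < exp 1 := one_lt_exp_iff.mpr one_pos
  rw [expMoment, ← intervalIntegral.integral_const_mul]
  refine intervalIntegral.integral_mono_on zero_le_one
    ((by fun_prop : Continuous _).intervalIntegrable _ _)
    ((by fun_prop : Continuous _).intervalIntegrable _ _) fun p ⟨hp0, hp1⟩ => ?_
  have : 0 ≤ 1 - p := sub_nonneg.mpr hp1
  rw [mul_assoc]
  gcongr

lemma expMoment_le_div {n k : ℕ} (hk : k ≤ n) :
    expMoment n k ≤ exp 1 / (exp 1 - 1) / ((n + 1) * n.choose k) := by
  simpa [integral_pow_mul_one_sub_pow_sub hk, div_eq_mul_one_div (exp 1 / _)] using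
    expMoment_le n k

lemma choose_succ_mul_expMoment_sq_le {n k : ℕ} (hk : k ≤ n) :
    (n + 1).choose (k + 1) * expMoment n k ^ 2
      ≤ (exp 1 / (exp 1 - 1)) ^ 2 / ((n + 1) * ((k + 1) * n.choose k)) := by
  have hpascal : ((n + 1).choose (k + 1) : ℝ) = (n + 1) * n.choose k / (k + 1) := by
    rw [eq_div_iff (by positivity)]
    exact_mod_cast (add_one_mul_choose_eq n k).symm
  calc (n + 1).choose (k + 1) * expMoment n k ^ 2
      ≤ (n + 1).choose (k + 1) * (exp 1 / (exp 1 - 1) / ((n + 1) * n.choose k)) ^ 2 := by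
        gcongr
        exacts [expMoment_nonneg n k, expMoment_le_div hk]
    _ = (exp 1 / (exp 1 - 1)) ^ 2 / ((n + 1) * ((k + 1) * n.choose k)) := by
        rw [hpascal]
        field_simp

lemma Nat.le_mul_choose {n k : ℕ} (hk : 1 ≤ k) (hkn : k ≤ n) : n ≤ k * n.choose k := by
  obtain ⟨m, rfl⟩ := Nat.exists_eq_add_of_le' (hk.trans hkn)
  obtain ⟨j, rfl⟩ := Nat.exists_eq_add_of_le' hk
  rw [mul_comm, ← add_one_mul_choose_eq]
  exact Nat.le_mul_of_pos_right _ (choose_pos (by omega))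

lemma sum_one_div_succ_mul_choose_le_two (n : ℕ) :
    ∑ k ∈ range (n + 1), (1 : ℝ) / ((k + 1) * n.choose k) ≤ 2 := by
  have hterm : ∀ k ∈ range n, (1 : ℝ) / ((k + 1 + 1) * n.choose (k + 1)) ≤ 1 / n := by
    intro k hk
    have hkn := mem_range.mp hk
    have hle : (n : ℝ) ≤ (k + 1) * n.choose (k + 1) := by
      exact_mod_cast Nat.le_mul_choose (Nat.le_add_left 1 k) hkn
    gcongr
    · exact_mod_cast Nat.zero_lt_of_lt hkn
    · linarith
  have htail := sum_le_card_nsmul _ _ _ hterm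
  rw [card_range, nsmul_eq_mul] at htail
  have : (n : ℝ) * (1 / n) ≤ 1 := by
    rcases n.eq_zero_or_pos with rfl | hn
    · simp
    · rw [mul_one_div_cancel (by positivity)]
  rw [sum_range_succ']
  push_cast
  simp only [zero_add, choose_zero_right, cast_one, one_mul, div_one]
  linarith

theorem stmt_10_general (a : ℕ) :
    (∑ t ∈ Finset.Icc 1 a, (a.choose t : ℝ) *
        (∫ p in (0:ℝ)..1,
          Real.exp p / (Real.exp 1 - 1) * p ^ (t - 1) * (1 - p) ^ ((a - 1) - (t - 1))) ^ 2)
      ≤ (Real.exp 1 / (Real.exp 1 - 1)) ^ 2 * (2 / (a : ℝ)) := by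
  rcases a with _ | n
  · simp
  set K := exp 1 / (exp 1 - 1)
  calc ∑ t ∈ Icc 1 (n + 1), ((n + 1).choose t : ℝ) * expMoment (n + 1 - 1) (t - 1) ^ 2
      = ∑ k ∈ range (n + 1), ((n + 1).choose (k + 1) : ℝ) * expMoment n k ^ 2 := by
        rw [show Icc 1 (n + 1) = (Icc 0 n).map (addRightEmbedding 1) by simp, sum_map,
          range_succ_eq_Icc_zero]
        simp
    _ ≤ ∑ k ∈ range (n + 1), K ^ 2 / (n + 1) * (1 / ((k + 1) * n.choose k)) := by
        refine sum_le_sum fun k hk => ?_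
        rw [_root_.div_mul_div_comm, mul_one]
        exact choose_succ_mul_expMoment_sq_le (mem_range_succ_iff.mp hk)
    _ ≤ K ^ 2 / (n + 1) * 2 := by
        rw [← mul_sum]
        gcongr
        exact sum_one_div_succ_mul_choose_le_two n
    _ = K ^ 2 * (2 / ↑(n + 1)) := by
        push_cast
        ring

/-- For any integer `a ≥ 2`,
`∑_{t=1}^{a} C(a,t) (m_{a-1,t-1})² ≤ (e/(e-1))² · 2/a`. -/
theorem stmt_10 (a : ℕ) (ha : 2 ≤ a) :
    (∑ t ∈ Finset.Icc 1 a, (a.choose t : ℝ) *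
        (∫ p in (0:ℝ)..1,
          Real.exp p / (Real.exp 1 - 1) * p ^ (t - 1) * (1 - p) ^ ((a - 1) - (t - 1))) ^ 2)
      ≤ (Real.exp 1 / (Real.exp 1 - 1)) ^ 2 * (2 / (a : ℝ)) :=
  stmt_10_general a
end

section
/- Let φ_h(A) = Σ_{T ⊆ A} m_{|A|−1,|T|−1} h(T) be the auxiliary function of a monotone submodular h with h(∅) = 0, where m_{s,t} = ∫_0^1 (e^p/(e−1)) p^t (1−p)^{s−t} dp. Then for every A ⊆ N: h(A) ≤ φ_h(A) ≤ (e/(e−1))·H_{|A|}·h(A), where H_k = Σ_{i=1}^k 1/i. -/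
/-- The Filmus–Ward coefficient `m_{s,t} = ∫_0^1 (e^p/(e-1)) p^t (1-p)^{s-t} dp`. -/
noncomputable def fwCoeff (s t : ℕ) : ℝ :=
  ∫ p in (0:ℝ)..1, Real.exp p / (Real.exp 1 - 1) * p ^ t * (1 - p) ^ (s - t)

private lemma fwE_pos : (0:ℝ) < Real.exp 1 - 1 := by
  nlinarith [Real.add_one_lt_exp (one_ne_zero : (1:ℝ) ≠ 0)]

/-- The binomial identity `∑_{S ⊆ B} p^{|S|} (1-p)^{|B|-|S|} = 1`. -/
private lemma binom_sum {α : Type*} [DecidableEq α] (p : ℝ) (B : Finset α) :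
    ∑ S ∈ B.powerset, p ^ S.card * (1 - p) ^ (B.card - S.card) = 1 := by
  induction B using Finset.induction_on with
  | empty => simp
  | @insert a B ha ih =>
    rw [Finset.sum_powerset_insert ha]
    have key1 : ∑ S ∈ B.powerset, p ^ S.card * (1 - p) ^ ((insert a B).card - S.card)
        = (1 - p) * ∑ S ∈ B.powerset, p ^ S.card * (1 - p) ^ (B.card - S.card) := by
      rw [Finset.mul_sum]
      refine Finset.sum_congr rfl fun S hS => ?_
      have hc : S.card ≤ B.card := Finset.card_le_card (Finset.mem_powerset.1 hS)
      rw [Finset.card_insert_of_notMem ha,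
        show B.card + 1 - S.card = (B.card - S.card) + 1 by omega]
      ring
    have key2 : ∑ S ∈ B.powerset,
        p ^ (insert a S).card * (1 - p) ^ ((insert a B).card - (insert a S).card)
        = p * ∑ S ∈ B.powerset, p ^ S.card * (1 - p) ^ (B.card - S.card) := by
      rw [Finset.mul_sum]
      refine Finset.sum_congr rfl fun S hS => ?_
      have haS : a ∉ S := fun hm => ha (Finset.mem_powerset.1 hS hm)
      rw [Finset.card_insert_of_notMem ha, Finset.card_insert_of_notMem haS,
        Nat.succ_sub_succ]
      ring
    rw [key1, key2, ih]
    ring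

/-- `∑_{∅ ≠ T ⊆ B} p^{|T|-1} (1-p)^{|B|-|T|} = ∑_{j<|B|} (1-p)^j`. -/
private lemma fwGeomSum {α : Type*} [DecidableEq α] (p : ℝ) (B : Finset α) :
    ∑ T ∈ B.powerset, (if T = ∅ then (0:ℝ) else p ^ (T.card - 1) * (1 - p) ^ (B.card - T.card))
      = ∑ j ∈ Finset.range B.card, (1 - p) ^ j := by
  induction B using Finset.induction_on with
  | empty => simp
  | @insert a B ha ih =>
    rw [Finset.sum_powerset_insert ha]
    have key1 : ∑ T ∈ B.powerset,
        (if T = ∅ then (0:ℝ) else p ^ (T.card - 1) * (1 - p) ^ ((insert a B).card - T.card))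
        = (1 - p) * ∑ T ∈ B.powerset,
            (if T = ∅ then (0:ℝ) else p ^ (T.card - 1) * (1 - p) ^ (B.card - T.card)) := by
      rw [Finset.mul_sum]
      refine Finset.sum_congr rfl fun T hT => ?_
      by_cases hT0 : T = ∅
      · simp [hT0]
      · have hc : T.card ≤ B.card := Finset.card_le_card (Finset.mem_powerset.1 hT)
        rw [if_neg hT0, if_neg hT0, Finset.card_insert_of_notMem ha,
          show B.card + 1 - T.card = (B.card - T.card) + 1 by omega]
        ring
    have key2 : ∑ S ∈ B.powerset,
        (if insert a S = ∅ then (0:ℝ)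
          else p ^ ((insert a S).card - 1) * (1 - p) ^ ((insert a B).card - (insert a S).card))
        = 1 := by
      have heq : (∑ S ∈ B.powerset,
          (if insert a S = ∅ then (0:ℝ)
            else p ^ ((insert a S).card - 1) * (1 - p) ^ ((insert a B).card - (insert a S).card)))
          = ∑ S ∈ B.powerset, p ^ S.card * (1 - p) ^ (B.card - S.card) := by
        refine Finset.sum_congr rfl fun S hS => ?_
        have haS : a ∉ S := fun hm => ha (Finset.mem_powerset.1 hS hm)
        rw [if_neg (Finset.insert_ne_empty a S), Finset.card_insert_of_notMem ha,
          Finset.card_insert_of_notMem haS,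
          show S.card + 1 - 1 = S.card by omega,
          show B.card + 1 - (S.card + 1) = B.card - S.card by omega]
      rw [heq, binom_sum]
    rw [key1, key2, ih, Finset.card_insert_of_notMem ha, Finset.sum_range_succ',
      Finset.mul_sum, pow_zero]
    congr 1
    exact Finset.sum_congr rfl fun x _ => by rw [pow_succ]; ring

/-- The sampling lower bound: for `p ∈ [0,1]`,
`h A ≤ ∑_{∅ ≠ T ⊆ A} p^{|T|-1} (1-p)^{|A|-|T|} h T`. -/
private lemma sampling_lb {α : Type*} [DecidableEq α] (h : Finset α → ℝ)
    (hempty : h ∅ = 0)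
    (hsub : ∀ A B : Finset α, A ⊆ B → ∀ x,
      h (insert x B) - h B ≤ h (insert x A) - h A)
    {p : ℝ} (hp0 : 0 ≤ p) (hp1 : p ≤ 1) (A : Finset α) :
    h A ≤ ∑ T ∈ A.powerset,
      (if T = ∅ then (0:ℝ) else p ^ (T.card - 1) * (1 - p) ^ (A.card - T.card)) * h T := by
  have hq0 : (0:ℝ) ≤ 1 - p := by linarith
  induction A using Finset.induction_on with
  | empty => simp [hempty]
  | @insert a B ha ih =>
    rw [Finset.sum_powerset_insert ha]
    set d := h (insert a B) - h B with hd
    set G := ∑ T ∈ B.powerset,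
      (if T = ∅ then (0:ℝ) else p ^ (T.card - 1) * (1 - p) ^ (B.card - T.card)) * h T with hG
    have key1 : ∑ T ∈ B.powerset,
        (if T = ∅ then (0:ℝ) else p ^ (T.card - 1) * (1 - p) ^ ((insert a B).card - T.card)) * h T
        = (1 - p) * G := by
      rw [hG, Finset.mul_sum]
      refine Finset.sum_congr rfl fun T hT => ?_
      by_cases hT0 : T = ∅
      · simp [hT0]
      · have hc : T.card ≤ B.card := Finset.card_le_card (Finset.mem_powerset.1 hT)
        rw [if_neg hT0, if_neg hT0, Finset.card_insert_of_notMem ha,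
          show B.card + 1 - T.card = (B.card - T.card) + 1 by omega]
        ring
    have step2a : ∑ S ∈ B.powerset,
        (if insert a S = ∅ then (0:ℝ)
          else p ^ ((insert a S).card - 1) * (1 - p) ^ ((insert a B).card - (insert a S).card))
          * h (insert a S)
        = ∑ S ∈ B.powerset, p ^ S.card * (1 - p) ^ (B.card - S.card) * h (insert a S) := by
      refine Finset.sum_congr rfl fun S hS => ?_
      have haS : a ∉ S := fun hm => ha (Finset.mem_powerset.1 hS hm)
      rw [if_neg (Finset.insert_ne_empty a S), Finset.card_insert_of_notMem ha,
        Finset.card_insert_of_notMem haS,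
        show S.card + 1 - 1 = S.card by omega,
        show B.card + 1 - (S.card + 1) = B.card - S.card by omega]
    have step2b : ∑ S ∈ B.powerset, p ^ S.card * (1 - p) ^ (B.card - S.card) * (h S + d)
        ≤ ∑ S ∈ B.powerset, p ^ S.card * (1 - p) ^ (B.card - S.card) * h (insert a S) := by
      refine Finset.sum_le_sum fun S hS => ?_
      have hsb := hsub S B (Finset.mem_powerset.1 hS) a
      have hle : h S + d ≤ h (insert a S) := by rw [hd]; linarith
      exact mul_le_mul_of_nonneg_left hle
        (mul_nonneg (pow_nonneg hp0 _) (pow_nonneg hq0 _))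
    have step2c : ∑ S ∈ B.powerset, p ^ S.card * (1 - p) ^ (B.card - S.card) * (h S + d)
        = p * G + d := by
      have expand : ∀ S ∈ B.powerset,
          p ^ S.card * (1 - p) ^ (B.card - S.card) * (h S + d)
          = p * ((if S = ∅ then (0:ℝ) else p ^ (S.card - 1) * (1 - p) ^ (B.card - S.card)) * h S)
            + p ^ S.card * (1 - p) ^ (B.card - S.card) * d := by
        intro S hS
        by_cases hS0 : S = ∅
        · simp [hS0, hempty]
        · have h1 : 1 ≤ S.card := Finset.card_pos.2 (Finset.nonempty_iff_ne_empty.2 hS0)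
          have hp : p ^ S.card = p * p ^ (S.card - 1) := by
            conv_lhs => rw [show S.card = (S.card - 1) + 1 by omega]
            rw [pow_succ]; ring
          rw [if_neg hS0, hp]; ring
      rw [Finset.sum_congr rfl expand, Finset.sum_add_distrib, ← Finset.mul_sum,
        ← Finset.sum_mul, binom_sum p B, one_mul, hG]
    have hGB : h B ≤ G := ih
    have hsplit : (1 - p) * G = G - p * G := by ring
    have hfin : h (insert a B) = h B + d := by rw [hd]; ring
    rw [key1, step2a]
    linarith [le_trans (le_of_eq step2c.symm) step2b]

private lemma cont_integrand {α : Type*} [DecidableEq α] (h : Finset α → ℝ) (A : Finset α)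
    (T : Finset α) :
    Continuous (fun p : ℝ => (Real.exp p / (Real.exp 1 - 1)) *
      ((if T = ∅ then (0:ℝ) else p ^ (T.card - 1) * (1 - p) ^ (A.card - T.card)) * h T)) := by
  by_cases hT : T = ∅
  · simp only [hT, if_pos]
    fun_prop
  · simp only [if_neg hT]
    fun_prop

/-- The auxiliary sum written as a single interval integral. -/
private lemma phi_integral {α : Type*} [DecidableEq α] (h : Finset α → ℝ) (A : Finset α) :
    ∑ T ∈ A.powerset, (if T = ∅ then (0:ℝ) else fwCoeff (A.card - 1) (T.card - 1)) * h T
      = ∫ p in (0:ℝ)..1, (Real.exp p / (Real.exp 1 - 1)) *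
          ∑ T ∈ A.powerset,
            (if T = ∅ then (0:ℝ) else p ^ (T.card - 1) * (1 - p) ^ (A.card - T.card)) * h T := by
  have hmulsum : ∀ p : ℝ, (Real.exp p / (Real.exp 1 - 1)) *
      ∑ T ∈ A.powerset,
        (if T = ∅ then (0:ℝ) else p ^ (T.card - 1) * (1 - p) ^ (A.card - T.card)) * h T
      = ∑ T ∈ A.powerset, (Real.exp p / (Real.exp 1 - 1)) *
        ((if T = ∅ then (0:ℝ) else p ^ (T.card - 1) * (1 - p) ^ (A.card - T.card)) * h T) :=
    fun p => Finset.mul_sum _ _ _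
  simp_rw [hmulsum]
  rw [intervalIntegral.integral_finset_sum
    (fun T _ => (cont_integrand h A T).intervalIntegrable 0 1)]
  refine Finset.sum_congr rfl fun T hT => ?_
  by_cases hT0 : T = ∅
  · simp [hT0]
  · have h1 : 1 ≤ T.card := Finset.card_pos.2 (Finset.nonempty_iff_ne_empty.2 hT0)
    have h2 : T.card ≤ A.card := Finset.card_le_card (Finset.mem_powerset.1 hT)
    simp only [if_neg hT0]
    rw [fwCoeff, show A.card - 1 - (T.card - 1) = A.card - T.card by omega,
      ← intervalIntegral.integral_mul_const]
    refine intervalIntegral.integral_congr fun p _ => ?_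
    ring

private lemma fw_nonneg (s t : ℕ) : 0 ≤ fwCoeff s t := by
  refine intervalIntegral.integral_nonneg zero_le_one fun x hx => ?_
  exact mul_nonneg (mul_nonneg (div_nonneg (Real.exp_pos x).le fwE_pos.le)
    (pow_nonneg hx.1 _)) (pow_nonneg (by linarith [hx.2]) _)

/-- For a monotone submodular `h` with `h ∅ = 0`, the auxiliary function
`φ_h(A) = ∑_{T ⊆ A} m_{|A|-1,|T|-1} h(T)` satisfies
`h(A) ≤ φ_h(A) ≤ (e/(e-1)) H_{|A|} h(A)` (terms with `T = ∅` contribute `0`). -/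
theorem stmt_12 {α : Type*} [DecidableEq α] (N : Finset α)
    (h : Finset α → ℝ) (hh0 : ∀ S, 0 ≤ h S) (hempty : h ∅ = 0)
    (hmono : ∀ A B : Finset α, A ⊆ B → h A ≤ h B)
    (hsub : ∀ A B : Finset α, A ⊆ B → ∀ x,
      h (insert x B) - h B ≤ h (insert x A) - h A)
    (φ : Finset α → ℝ)
    (hφ : ∀ A : Finset α, φ A =
      ∑ T ∈ A.powerset, (if T = ∅ then 0 else fwCoeff (A.card - 1) (T.card - 1)) * h T)
    (A : Finset α) (hA : A ⊆ N) :
    h A ≤ φ A ∧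
      φ A ≤ (Real.exp 1 / (Real.exp 1 - 1)) *
        (∑ i ∈ Finset.range A.card, (1 : ℝ) / (i + 1)) * h A := by
  have hE := fwE_pos
  constructor
  · -- lower bound
    rw [hφ, phi_integral]
    have hconst : (∫ p in (0:ℝ)..1, (Real.exp p / (Real.exp 1 - 1)) * h A) = h A := by
      have : ∀ p : ℝ, Real.exp p / (Real.exp 1 - 1) * h A
          = Real.exp p * (h A / (Real.exp 1 - 1)) := fun p => by ring
      simp_rw [this]
      rw [intervalIntegral.integral_mul_const, integral_exp, Real.exp_zero]
      field_simp
    have hmonoI : (∫ p in (0:ℝ)..1, (Real.exp p / (Real.exp 1 - 1)) * h A)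
        ≤ ∫ p in (0:ℝ)..1, (Real.exp p / (Real.exp 1 - 1)) *
            ∑ T ∈ A.powerset,
              (if T = ∅ then (0:ℝ) else p ^ (T.card - 1) * (1 - p) ^ (A.card - T.card)) * h T := by
      refine intervalIntegral.integral_mono_on zero_le_one
        ((by fun_prop : Continuous fun p : ℝ =>
          (Real.exp p / (Real.exp 1 - 1)) * h A).intervalIntegrable 0 1)
        (Continuous.intervalIntegrable ?_ 0 1) ?_
      · exact Continuous.mul (by fun_prop)
          (continuous_finset_sum _ fun T _ => by
            by_cases hT : T = ∅
            · simp only [hT, if_pos]; fun_prop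
            · simp only [if_neg hT]; fun_prop)
      · intro p hp
        exact mul_le_mul_of_nonneg_left
          (sampling_lb h hempty hsub hp.1 hp.2 A)
          (div_nonneg (Real.exp_pos p).le hE.le)
    linarith [hconst ▸ hmonoI]
  · -- upper bound
    rw [hφ]
    have step1 : ∑ T ∈ A.powerset,
        (if T = ∅ then (0:ℝ) else fwCoeff (A.card - 1) (T.card - 1)) * h T
        ≤ (∑ T ∈ A.powerset,
            (if T = ∅ then (0:ℝ) else fwCoeff (A.card - 1) (T.card - 1))) * h A := by
      rw [Finset.sum_mul]
      refine Finset.sum_le_sum fun T hT => ?_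
      by_cases hT0 : T = ∅
      · simp [hT0, hempty]
      · simp only [if_neg hT0]
        exact mul_le_mul_of_nonneg_left (hmono T A (Finset.mem_powerset.1 hT))
          (fw_nonneg _ _)
    have step2 : (∑ T ∈ A.powerset,
        (if T = ∅ then (0:ℝ) else fwCoeff (A.card - 1) (T.card - 1)))
        ≤ (Real.exp 1 / (Real.exp 1 - 1)) * ∑ i ∈ Finset.range A.card, (1 : ℝ) / (i + 1) := by
      have hones : (∑ T ∈ A.powerset,
          (if T = ∅ then (0:ℝ) else fwCoeff (A.card - 1) (T.card - 1)))
          = ∑ T ∈ A.powerset,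
            (if T = ∅ then (0:ℝ) else fwCoeff (A.card - 1) (T.card - 1)) * (fun _ => (1:ℝ)) T := by
        simp
      rw [hones, phi_integral (fun _ => (1:ℝ)) A]
      have hgeo : ∀ p : ℝ, (Real.exp p / (Real.exp 1 - 1)) *
          ∑ T ∈ A.powerset,
            (if T = ∅ then (0:ℝ) else p ^ (T.card - 1) * (1 - p) ^ (A.card - T.card))
              * (fun _ => (1:ℝ)) T
          = ∑ j ∈ Finset.range A.card,
              (Real.exp p / (Real.exp 1 - 1)) * (1 - p) ^ j := by
        intro p
        rw [Finset.mul_sum]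
        rw [← Finset.mul_sum, ← Finset.mul_sum]
        congr 1
        simpa using fwGeomSum p A
      simp_rw [hgeo]
      rw [intervalIntegral.integral_finset_sum
        (fun j _ => (by fun_prop : Continuous fun p : ℝ =>
          (Real.exp p / (Real.exp 1 - 1)) * (1 - p) ^ j).intervalIntegrable 0 1)]
      rw [Finset.mul_sum]
      refine Finset.sum_le_sum fun j _ => ?_
      have hj : (∫ p in (0:ℝ)..1, (Real.exp p / (Real.exp 1 - 1)) * (1 - p) ^ j)
          ≤ ∫ p in (0:ℝ)..1, (Real.exp 1 / (Real.exp 1 - 1)) * (1 - p) ^ j := by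
        refine intervalIntegral.integral_mono_on zero_le_one
          ((by fun_prop : Continuous fun p : ℝ =>
            (Real.exp p / (Real.exp 1 - 1)) * (1 - p) ^ j).intervalIntegrable 0 1)
          ((by fun_prop : Continuous fun p : ℝ =>
            (Real.exp 1 / (Real.exp 1 - 1)) * (1 - p) ^ j).intervalIntegrable 0 1)
          fun p hp => ?_
        refine mul_le_mul_of_nonneg_right ?_ (pow_nonneg (by linarith [hp.2]) _)
        exact (div_le_div_iff_of_pos_right fwE_pos).2 (Real.exp_le_exp.2 hp.2)
      have hval : (∫ p in (0:ℝ)..1, (Real.exp 1 / (Real.exp 1 - 1)) * (1 - p) ^ j)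
          = Real.exp 1 / (Real.exp 1 - 1) * (1 / (j + 1)) := by
        rw [intervalIntegral.integral_const_mul]
        congr 1
        rw [intervalIntegral.integral_comp_sub_left (fun x : ℝ => x ^ j) 1]
        norm_num [integral_pow]
      rw [hval] at hj
      exact hj
    calc ∑ T ∈ A.powerset,
        (if T = ∅ then (0:ℝ) else fwCoeff (A.card - 1) (T.card - 1)) * h T
        ≤ (∑ T ∈ A.powerset,
            (if T = ∅ then (0:ℝ) else fwCoeff (A.card - 1) (T.card - 1))) * h A := step1
      _ ≤ (Real.exp 1 / (Real.exp 1 - 1)) *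
            (∑ i ∈ Finset.range A.card, (1 : ℝ) / (i + 1)) * h A :=
          mul_le_mul_of_nonneg_right step2 (hh0 A)
end

section
/- Greedy with 2α-corrupted comparisons: Let φ be a monotone submodular function with φ(∅)=0 on a matroid M of rank r, let O* be a maximizer of φ over bases, and let u_1,…,u_r be elements chosen so that U_i = {u_1,…,u_i} is independent and, with o_i = π(u_i) given by Brualdi's bijection between U_r and O*, φ(U_{i−1} + u_i) ≥ φ(U_{i−1} + o_i) − 2α·φ(O*) for all i. Then φ(U_r) ≥ ((1 − 2rα)/2)·φ(O*). -/
/-- Greedy with `2α`-corrupted comparisons. With `U i` the first `i`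
greedy elements (all independent), `O*` a maximizer of `φ` over independent sets, and
`o i` its Brualdi pairing (so `U_{i-1} + o_i` is independent), if
`φ(U_{i-1} + u_i) ≥ φ(U_{i-1} + o_i) - 2α φ(O*)` for all `i`, then
`φ(U_r) ≥ ((1 - 2rα)/2) φ(O*)`. -/
theorem stmt_13 {α' : Type*} [DecidableEq α'] (N : Finset α')
    (Indep : Finset α' → Prop) (r : ℕ)
    (φ : Finset α' → ℝ) (hφ0 : ∀ S, 0 ≤ φ S) (hempty : φ ∅ = 0)
    (hmono : ∀ A B : Finset α', A ⊆ B → φ A ≤ φ B)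
    (hsub : ∀ A B : Finset α', A ⊆ B → ∀ x,
      φ (insert x B) - φ B ≤ φ (insert x A) - φ A)
    (a : ℝ) (ha : 0 ≤ a)
    (u o : ℕ → α') (U : ℕ → Finset α')
    (hU : ∀ i, U i = (Finset.range i).image u)
    (hUind : ∀ i ≤ r, Indep (U i))
    (Ostar : Finset α') (hOimg : Ostar = (Finset.range r).image o)
    (hOind : Indep Ostar)
    (hOmax : ∀ S : Finset α', Indep S → φ S ≤ φ Ostar)
    (hoind : ∀ i < r, Indep (insert (o i) (U i)))
    (hgreedy : ∀ i < r,
      φ (insert (u i) (U i)) ≥ φ (insert (o i) (U i)) - 2 * a * φ Ostar) :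
    φ (U r) ≥ ((1 - 2 * (r : ℝ) * a) / 2) * φ Ostar := by
  have hUsucc : ∀ k, U (k+1) = insert (u k) (U k) := by
    intro k; rw [hU, hU, Finset.range_add_one, Finset.image_insert]
  have hU0 : U 0 = ∅ := by rw [hU]; simp
  set V : ℕ → Finset α' := fun k => U r ∪ (Finset.range k).image o with hV
  have hV0 : V 0 = U r := by simp [hV]
  have hVr : Ostar ⊆ V r := by rw [hOimg]; exact Finset.subset_union_right
  have hUsub : ∀ k, k ≤ r → U k ⊆ U r := by
    intro k hk; rw [hU, hU]
    exact Finset.image_subset_image (Finset.range_subset_range.2 hk)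
  have key : ∀ k < r, φ (V (k+1)) - φ (V k) ≤ φ (insert (o k) (U k)) - φ (U k) := by
    intro k hk
    have h1 : V (k+1) = insert (o k) (V k) := by
      simp [hV, Finset.range_add_one, Finset.image_insert, Finset.union_insert]
    rw [h1]
    exact hsub (U k) (V k) ((hUsub k hk.le).trans Finset.subset_union_left) (o k)
  have tU : ∑ k ∈ Finset.range r, (φ (U (k+1)) - φ (U k)) = φ (U r) := by
    rw [Finset.sum_range_sub (fun k => φ (U k)), hU0, hempty]; ring
  have tV : ∑ k ∈ Finset.range r, (φ (V (k+1)) - φ (V k)) = φ (V r) - φ (U r) := by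
    rw [Finset.sum_range_sub (fun k => φ (V k)), hV0]
  have step : ∀ k ∈ Finset.range r,
      φ (V (k+1)) - φ (V k) ≤ (φ (U (k+1)) - φ (U k)) + 2 * a * φ Ostar := by
    intro k hk
    have hk' := Finset.mem_range.1 hk
    have h1 := key k hk'
    have hg := hgreedy k hk'
    rw [hUsucc k]
    linarith
  have hsum := Finset.sum_le_sum step
  rw [tV, Finset.sum_add_distrib, tU, Finset.sum_const, Finset.card_range,
    nsmul_eq_mul] at hsum
  have hOV : φ Ostar ≤ φ (V r) := hmono _ _ hVr
  have hra : (r : ℝ) * (2 * a * φ Ostar) = 2 * r * a * φ Ostar := by ring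
  rw [hra] at hsum
  linarith [hφ0 Ostar]
end
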